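/- Let G be a 4-Ore graph not isomorphic to K4. Then for every vertex v of G, there exists a nontrivial cocollapsible subset of V(G) contained in V(G)∖{v}. -/

import Mathlib

open SimpleGraph

/-- The degree of a vertex, as the cardinality of its neighbor set. -/
noncomputable def deg {V : Type} (G : SimpleGraph V) (v : V) : ℕ :=
  Nat.card (G.neighborSet v)

/-- The number of edges of a graph. -/
noncomputable def numEdges {V : Type} (G : SimpleGraph V) : ℕ :=
  Nat.card G.edgeSet

/-- The independence number of a graph. -/
noncomputable def indepNum {V : Type} (G : SimpleGraph V) : ℕ :=
  sSup {n | ∃ s : Set V, (∀ u ∈ s, ∀ v ∈ s, ¬ G.Adj u v) ∧ s.ncard = n}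

/-- The set of vertices of degree at most three. -/
noncomputable def D3set {V : Type} (G : SimpleGraph V) : Set V :=
  {v | deg G v ≤ 3}

/-- `D3(G)`: the subgraph induced by the vertices of degree at most three. -/
noncomputable def D3 {V : Type} (G : SimpleGraph V) : SimpleGraph (D3set G) :=
  G.induce (D3set G)

/-- The potential of a graph: `p(G) = 4.8 |V(G)| - 3 |E(G)| + 0.6 α(D3(G))`. -/
noncomputable def potential {V : Type} (G : SimpleGraph V) : ℚ :=
  (24/5 : ℚ) * Nat.card V - 3 * numEdges G + (3/5 : ℚ) * _root_.indepNum (D3 G)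

/-- The potential of a subset `R` of the vertices of `G`:
`p(R) = 4.8 |R| - 3 |E(G[R])| + 0.6 α(G[D3(G) ∩ R])`. -/
noncomputable def potentialOf {V : Type} (G : SimpleGraph V) (R : Set V) : ℚ :=
  (24/5 : ℚ) * R.ncard - 3 * numEdges (G.induce R)
    + (3/5 : ℚ) * _root_.indepNum (G.induce (D3set G ∩ R))

/-- A graph is `k`-critical if it is not `(k-1)`-colorable but every proper
subgraph is `(k-1)`-colorable. -/
def IsKCritical {V : Type} (G : SimpleGraph V) (k : ℕ) : Prop :=
  ¬ G.Colorable (k - 1) ∧ ∀ H : SimpleGraph V, H ≤ G → H ≠ G → H.Colorable (k - 1)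

/-- A graph has Ore-degree at most `d` if `d(u) + d(v) ≤ d` for every edge `uv`. -/
def OreDegreeAtMost {V : Type} (G : SimpleGraph V) (d : ℕ) : Prop :=
  ∀ u v, G.Adj u v → deg G u + deg G v ≤ d

/-- The Ore-composition of `G1` (edge-side, with replaced edge `xy`) and `G2`
(split-side, with split vertex `z` whose incident edges going to `A` are attached
to `x` and the remaining ones to `y`). -/
def oreCompose {V1 V2 : Type} (G1 : SimpleGraph V1) (G2 : SimpleGraph V2)
    (x y : V1) (z : V2) (A : Set V2) :
    SimpleGraph (V1 ⊕ {v : V2 // v ≠ z}) :=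
  SimpleGraph.fromRel (fun a b =>
    match a, b with
    | Sum.inl u, Sum.inl v =>
        G1.Adj u v ∧ ¬((u = x ∧ v = y) ∨ (u = y ∧ v = x))
    | Sum.inl u, Sum.inr v =>
        (u = x ∧ G2.Adj z v.1 ∧ v.1 ∈ A) ∨ (u = y ∧ G2.Adj z v.1 ∧ v.1 ∉ A)
    | Sum.inr _, Sum.inl _ => False
    | Sum.inr u, Sum.inr v => G2.Adj u.1 v.1)

/-- `G` is an Ore-composition of `G1` and `G2`: there are a replaced edge `xy` of
`G1`, a split vertex `z` of `G2`, and a splitting of the edges at `z` into two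
nonempty parts, such that `G` is isomorphic to the resulting composition. -/
def IsOreComposition {V V1 V2 : Type} (G : SimpleGraph V)
    (G1 : SimpleGraph V1) (G2 : SimpleGraph V2) : Prop :=
  ∃ (x y : V1) (z : V2) (A : Set V2),
    G1.Adj x y ∧ (∃ p, G2.Adj z p ∧ p ∈ A) ∧ (∃ q, G2.Adj z q ∧ q ∉ A) ∧
    Nonempty (G ≃g oreCompose G1 G2 x y z A)

/-- The family of `4`-Ore graphs: the smallest family of graphs containing `K4`
and closed under Ore-compositions. -/
inductive IsFourOre : ∀ {V : Type}, SimpleGraph V → Prop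
  | k4 {V : Type} (G : SimpleGraph V) :
      Nonempty (G ≃g completeGraph (Fin 4)) → IsFourOre G
  | comp {V V1 V2 : Type} (G : SimpleGraph V)
      (G1 : SimpleGraph V1) (G2 : SimpleGraph V2) :
      IsFourOre G1 → IsFourOre G2 → IsOreComposition G G1 G2 → IsFourOre G

/-- The boundary of a set `R`: the vertices of `R` with a neighbor outside `R`. -/
def boundary {V : Type} (G : SimpleGraph V) (R : Set V) : Set V :=
  {v | v ∈ R ∧ ∃ u, u ∉ R ∧ G.Adj v u}

/-- A proper subset `R` of the vertices with `|R| ≥ 2` is collapsible if in every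
proper 3-coloring of `G[R]` all vertices of the boundary of `R` get the same color. -/
def Collapsible {V : Type} (G : SimpleGraph V) (R : Set V) : Prop :=
  R ≠ Set.univ ∧ 2 ≤ R.ncard ∧
  ∀ φ : V → Fin 3, (∀ u ∈ R, ∀ v ∈ R, G.Adj u v → φ u ≠ φ v) →
    ∀ u ∈ boundary G R, ∀ v ∈ boundary G R, φ u = φ v

/-- The critical complement of a set `R`: identify the boundary of `R` to a single
vertex (the vertex `none`) and delete the rest of `R`. -/
def criticalComplement {V : Type} (G : SimpleGraph V) (R : Set V) :
    SimpleGraph (Option {v : V // v ∉ R}) :=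
  SimpleGraph.fromRel (fun a b =>
    match a, b with
    | some u, some v => G.Adj u.1 v.1
    | some u, none => ∃ w ∈ boundary G R, G.Adj u.1 w
    | none, some _ => False
    | none, none => False)

/-- A nonempty proper subset `R` with boundary `S` is cocollapsible if every vertex
of `S` has exactly one neighbor outside `R`, and for every non-constant list of
forbidden colors on `S` there is a proper 3-coloring of `G[R]` avoiding them. -/
def Cocollapsible {V : Type} (G : SimpleGraph V) (R : Set V) : Prop :=
  R.Nonempty ∧ R ≠ Set.univ ∧
  (∀ v ∈ boundary G R, ∃! u, u ∉ R ∧ G.Adj v u) ∧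
  ∀ f : V → Fin 3,
    (∃ u ∈ boundary G R, ∃ v ∈ boundary G R, f u ≠ f v) →
    ∃ φ : V → Fin 3, (∀ u ∈ R, ∀ v ∈ R, G.Adj u v → φ u ≠ φ v) ∧
      ∀ v ∈ boundary G R, φ v ≠ f v

/-- A cocollapsible set is nontrivial if its complement has more than one vertex. -/
def NontrivialCocollapsible {V : Type} (G : SimpleGraph V) (R : Set V) : Prop :=
  Cocollapsible G R ∧ 1 < (Rᶜ : Set V).ncard

/-- The graph `H` together with the (possibly new) edge `uv`. -/
def withEdge {W : Type} (H : SimpleGraph W) (u v : W) : SimpleGraph W :=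
  H ⊔ SimpleGraph.fromEdgeSet {s(u, v)}

/-- A collapsible set `R` is tight if for any two distinct boundary vertices `u, v`
the graph `G[R] + uv` is `4`-critical. -/
def TightCollapsible {V : Type} (G : SimpleGraph V) (R : Set V) : Prop :=
  Collapsible G R ∧
  ∀ u (hu : u ∈ boundary G R) v (hv : v ∈ boundary G R), u ≠ v →
    IsKCritical (withEdge (G.induce R) ⟨u, hu.1⟩ ⟨v, hv.1⟩) 4

/-- `s(H) = |E(H)| - |V(H)| + α(H)`. -/
noncomputable def sVal {V : Type} (H : SimpleGraph V) : ℤ :=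
  (numEdges H : ℤ) - (Nat.card V : ℤ) + (_root_.indepNum H : ℤ)

/-- `H7`: the unique Ore-composition of two copies of `K4`. Vertices `0,1,2,3`
form the edge-side `K4` with replaced edge `01`; the split vertex of the second
`K4` on `{z,4,5,6}` is split so that `0` gets the edge to `4` and `1` gets the
edges to `5` and `6`. -/
def H7 : SimpleGraph (Fin 7) :=
  SimpleGraph.fromRel (fun a b =>
    ((a, b) : Fin 7 × Fin 7) ∈
      ([(0, 2), (0, 3), (1, 2), (1, 3), (2, 3), (4, 5), (4, 6), (5, 6),
        (0, 4), (1, 5), (1, 6)] : List (Fin 7 × Fin 7)))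

/-- A diamond in `G`: a subgraph isomorphic to `K4` minus an edge whose two
vertices of degree three within the subgraph (`w1` and `w2`) also have degree
three in `G`.  The vertices `e1` and `e2` are the ends of the diamond. -/
def IsDiamond {V : Type} (G : SimpleGraph V) (e1 e2 w1 w2 : V) : Prop :=
  e1 ≠ e2 ∧ e1 ≠ w1 ∧ e1 ≠ w2 ∧ e2 ≠ w1 ∧ e2 ≠ w2 ∧ w1 ≠ w2 ∧
  G.Adj w1 w2 ∧ G.Adj e1 w1 ∧ G.Adj e1 w2 ∧ G.Adj e2 w1 ∧ G.Adj e2 w2 ∧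
  deg G w1 = 3 ∧ deg G w2 = 3

/-- A triangle with a pendant edge. -/
def trianglePendant1 : SimpleGraph (Fin 4) :=
  SimpleGraph.fromRel (fun a b =>
    ((a, b) : Fin 4 × Fin 4) ∈ ([(0, 1), (1, 2), (2, 0), (0, 3)] : List (Fin 4 × Fin 4)))

/-- A triangle with a pendant path on two further vertices. -/
def trianglePendant2 : SimpleGraph (Fin 5) :=
  SimpleGraph.fromRel (fun a b =>
    ((a, b) : Fin 5 × Fin 5) ∈
      ([(0, 1), (1, 2), (2, 0), (0, 3), (3, 4)] : List (Fin 5 × Fin 5)))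

/-! Every `4`-Ore graph other than `K4` contains two disjoint pendant triangles, i.e. triangles
each of whose vertices has exactly one neighbor outside. This survives Ore-composition: pendant
triangles of the split side avoiding the split vertex `z` lift unchanged. If only one of them
is available, then `z` itself lies in a pendant triangle (or the split side is `K4`), so `z` has
degree three and one of `x`, `y` receives a single edge of `z`; a pendant triangle of the edge
side avoiding the other end of `xy` then lifts as well.

A pendant triangle is cocollapsible because `K3` is colorable from lists of size two that are
not all equal, and it is nontrivial when another triangle lies outside it. Of two disjoint
pendant triangles, one avoids `v`. -/

lemma existsUnique_adj_mem_or_not_mem {V : Type} {G : SimpleGraph V} {z : V} {A : Set V}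
    (hfin : (G.neighborSet z).Finite) (hdeg : (G.neighborSet z).ncard ≤ 3)
    (hA : ∃ p, G.Adj z p ∧ p ∈ A) (hB : ∃ q, G.Adj z q ∧ q ∉ A) :
    (∃! a, G.Adj z a ∧ a ∈ A) ∨ (∃! b, G.Adj z b ∧ b ∉ A) := by
  have hsum := Set.ncard_inter_add_ncard_sdiff_eq_ncard (G.neighborSet z) A hfin
  have hpos : 0 < (G.neighborSet z ∩ A).ncard := (Set.ncard_pos (hfin.inter_of_left A)).2 hA
  have hpos' : 0 < (G.neighborSet z \ A).ncard := (Set.ncard_pos hfin.sdiff).2 hB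
  have hone : (G.neighborSet z ∩ A).ncard = 1 ∨ (G.neighborSet z \ A).ncard = 1 := by omega
  rcases hone with h | h <;> obtain ⟨a, ha⟩ := Set.ncard_eq_one.1 h <;>
    obtain ⟨ha, ha'⟩ := Set.eq_singleton_iff_unique_mem.1 ha
  exacts [Or.inl ⟨a, ha, ha'⟩, Or.inr ⟨a, ha, ha'⟩]

section PendantTriangle

variable {V W : Type} {G : SimpleGraph V} {H : SimpleGraph W} {T : Set V}

def IsPendantTriangle (G : SimpleGraph V) (T : Set V) : Prop :=
  G.IsClique T ∧ T.ncard = 3 ∧ ∀ t ∈ T, ∃! u, u ∉ T ∧ G.Adj t u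

def HasDisjointPendantTriangles (G : SimpleGraph V) : Prop :=
  ∃ T T', IsPendantTriangle G T ∧ IsPendantTriangle G T' ∧ Disjoint T T'

lemma IsPendantTriangle.finite (hT : IsPendantTriangle G T) : T.Finite :=
  Set.finite_of_ncard_ne_zero (by rw [hT.2.1]; decide)

lemma IsPendantTriangle.boundary_eq (hT : IsPendantTriangle G T) : boundary G T = T :=
  Set.sep_eq_self_iff_mem_true.2 fun t ht => (hT.2.2 t ht).exists

lemma IsPendantTriangle.neighborSet_finite_ncard_le {t : V} (hT : IsPendantTriangle G T)
    (ht : t ∈ T) : (G.neighborSet t).Finite ∧ (G.neighborSet t).ncard ≤ 3 := by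
  obtain ⟨u, -, hu⟩ := hT.2.2 t ht
  have hsub : G.neighborSet t ⊆ insert u (T \ {t}) := by
    intro s hs
    by_cases hsT : s ∈ T
    · exact Or.inr ⟨hsT, G.ne_of_adj hs ∘ Eq.symm⟩
    · exact Or.inl (hu s ⟨hsT, hs⟩)
  have hfin : (insert u (T \ {t})).Finite := hT.finite.sdiff.insert u
  refine ⟨hfin.subset hsub, (Set.ncard_le_ncard hsub hfin).trans ?_⟩
  calc (insert u (T \ {t})).ncard ≤ (T \ {t}).ncard + 1 := Set.ncard_insert_le _ _
    _ = 3 := by rw [Set.ncard_sdiff_singleton_of_mem ht, hT.2.1]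

lemma IsPendantTriangle.comap (e : G ≃g H) {T : Set W} (hT : IsPendantTriangle H T) :
    IsPendantTriangle G (e ⁻¹' T) := by
  refine ⟨fun u hu v hv huv => e.map_adj_iff.1 (hT.1 hu hv (e.injective.ne huv)), ?_,
    fun t ht => ?_⟩
  · rw [Set.ncard_preimage_of_injective_subset_range e.injective
      (by simp [e.surjective.range_eq]), hT.2.1]
  · have := (e.toEquiv.existsUnique_congr_right (q := fun w => w ∉ T ∧ H.Adj (e t) w)).2
      (hT.2.2 _ ht)
    simpa [e.map_adj_iff] using this

lemma HasDisjointPendantTriangles.comap (e : G ≃g H) (h : HasDisjointPendantTriangles H) :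
    HasDisjointPendantTriangles G := by
  obtain ⟨T, T', hT, hT', hTT'⟩ := h
  exact ⟨_, _, hT.comap e, hT'.comap e, hTT'.preimage e⟩

lemma isPendantTriangle_compl_singleton {W : Type} [Finite W] (hW : Nat.card W = 4) (j : W) :
    IsPendantTriangle (completeGraph W) {j}ᶜ := by
  refine ⟨fun u _ v _ huv => huv, ?_, fun t ht => ⟨j, ⟨by simp, ht⟩, by simp⟩⟩
  rw [Set.ncard_compl, hW, Set.ncard_singleton]

end PendantTriangle

section Coloring

variable {V : Type} {G : SimpleGraph V} {T : Set V}

lemma exists_injective_avoiding_of_card_eq_three {ι : Type*} [Finite ι] (hι : Nat.card ι = 3)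
    (g : ι → Fin 3) (hg : ∃ i j, g i ≠ g j) :
    ∃ φ : ι → Fin 3, Function.Injective φ ∧ ∀ i, φ i ≠ g i := by
  let e := Finite.equivFinOfCardEq hι
  have hFin3 : ∀ g : Fin 3 → Fin 3, (∃ i j, g i ≠ g j) →
      ∃ σ : Equiv.Perm (Fin 3), ∀ i, σ i ≠ g i := by
    decide
  obtain ⟨i, j, hij⟩ := hg
  obtain ⟨σ, hσ⟩ := hFin3 (g ∘ e.symm) ⟨e i, e j, by simpa using hij⟩
  exact ⟨σ ∘ e, σ.injective.comp e.injective, fun i => by simpa using hσ (e i)⟩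

lemma IsPendantTriangle.cocollapsible (hT : IsPendantTriangle G T) (hT_ne : T ≠ Set.univ) :
    Cocollapsible G T := by
  classical
  have : Finite T := hT.finite.to_subtype
  refine ⟨Set.nonempty_of_ncard_ne_zero (by rw [hT.2.1]; decide), hT_ne,
    by rw [hT.boundary_eq]; exact hT.2.2, fun f hf => ?_⟩
  rw [hT.boundary_eq] at hf ⊢
  obtain ⟨i, hi, j, hj, hij⟩ := hf
  obtain ⟨φ, hφ, hφf⟩ := exists_injective_avoiding_of_card_eq_three
    (by rw [Nat.card_coe_set_eq, hT.2.1]) (fun t : T => f t) ⟨⟨i, hi⟩, ⟨j, hj⟩, hij⟩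
  refine ⟨fun v => if h : v ∈ T then φ ⟨v, h⟩ else 0, fun u hu v hv huv => ?_,
    fun v hv => ?_⟩
  · simp only [dif_pos hu, dif_pos hv]
    exact hφ.ne fun h => G.ne_of_adj huv (congrArg Subtype.val h)
  · simpa [dif_pos hv] using hφf ⟨v, hv⟩

lemma IsPendantTriangle.nontrivialCocollapsible [Finite V] {T' : Set V}
    (hT : IsPendantTriangle G T) (hT' : IsPendantTriangle G T') (hTT' : Disjoint T T') :
    NontrivialCocollapsible G T := by
  have hcompl : 1 < Tᶜ.ncard := calc
    1 < T'.ncard := by rw [hT'.2.1]; decide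
    _ ≤ Tᶜ.ncard := Set.ncard_le_ncard hTT'.subset_compl_left
  refine ⟨hT.cocollapsible fun h => ?_, hcompl⟩
  simp [h] at hcompl

end Coloring

section OreComposition

variable {V1 V2 : Type} {G1 : SimpleGraph V1} {G2 : SimpleGraph V2} {x y : V1} {z : V2}
  {A : Set V2}

@[simp]
lemma oreCompose_adj_inl_inl {u v : V1} :
    (oreCompose G1 G2 x y z A).Adj (Sum.inl u) (Sum.inl v) ↔
      G1.Adj u v ∧ ¬((u = x ∧ v = y) ∨ (u = y ∧ v = x)) := by
  rw [oreCompose, fromRel_adj]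
  grind [G1.ne_of_adj, G1.adj_symm]

@[simp]
lemma oreCompose_adj_inl_inr {u : V1} {v : {v : V2 // v ≠ z}} :
    (oreCompose G1 G2 x y z A).Adj (Sum.inl u) (Sum.inr v) ↔
      (u = x ∧ G2.Adj z v ∧ v.1 ∈ A) ∨ (u = y ∧ G2.Adj z v ∧ v.1 ∉ A) := by
  rw [oreCompose, fromRel_adj]
  simp

@[simp]
lemma oreCompose_adj_inr_inl {u : V1} {v : {v : V2 // v ≠ z}} :
    (oreCompose G1 G2 x y z A).Adj (Sum.inr v) (Sum.inl u) ↔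
      (u = x ∧ G2.Adj z v ∧ v.1 ∈ A) ∨ (u = y ∧ G2.Adj z v ∧ v.1 ∉ A) := by
  rw [adj_comm, oreCompose_adj_inl_inr]

@[simp]
lemma oreCompose_adj_inr_inr {u v : {v : V2 // v ≠ z}} :
    (oreCompose G1 G2 x y z A).Adj (Sum.inr u) (Sum.inr v) ↔ G2.Adj u v := by
  rw [oreCompose, fromRel_adj]
  grind [G2.ne_of_adj, G2.adj_symm]

lemma oreCompose_swap : oreCompose G1 G2 y x z Aᶜ = oreCompose G1 G2 x y z A := by
  ext (u | u) (v | v) <;> simp <;> tauto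


lemma IsPendantTriangle.oreCompose_inr {T : Set V2} (hT : IsPendantTriangle G2 T) (hz : z ∉ T) :
    IsPendantTriangle (oreCompose G1 G2 x y z A) (Sum.inr '' (Subtype.val ⁻¹' T)) := by
  refine ⟨?_, ?_, ?_⟩
  · rintro _ ⟨u, hu, rfl⟩ _ ⟨v, hv, rfl⟩ huv
    exact oreCompose_adj_inr_inr.2 (hT.1 hu hv fun h => huv (by rw [Subtype.ext h]))
  · rw [Set.ncard_image_of_injective _ Sum.inr_injective,
      Set.ncard_preimage_of_injective_subset_range Subtype.val_injective
        fun t ht => ⟨⟨t, ne_of_mem_of_not_mem ht hz⟩, rfl⟩, hT.2.1]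
  classical
  rintro _ ⟨t, ht, rfl⟩
  obtain ⟨u, ⟨huT, htu⟩, hu⟩ := hT.2.2 t ht
  by_cases huz : u = z
  · rw [huz] at htu hu
    -- the edge `tz` of `G2` becomes an edge from `t` to `x` or to `y`
    refine ⟨Sum.inl (if t.1 ∈ A then x else y), ⟨by simp, ?_⟩, ?_⟩
    · by_cases htA : t.1 ∈ A <;> simp [htA, htu.symm]
    · rintro (s | s) ⟨hs, hts⟩
      · by_cases htA : t.1 ∈ A <;> simp_all
      · exact absurd (hu s ⟨by simpa using hs, oreCompose_adj_inr_inr.1 hts⟩) s.2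
  · refine ⟨Sum.inr ⟨u, huz⟩, ⟨by simpa using huT, oreCompose_adj_inr_inr.2 htu⟩, ?_⟩
    rintro (s | s) ⟨hs, hts⟩
    · have hzt : G2.Adj t z := by
        rcases oreCompose_adj_inr_inl.1 hts with ⟨-, h, -⟩ | ⟨-, h, -⟩ <;> exact h.symm
      exact absurd (hu z ⟨hz, hzt⟩).symm huz
    · simp only [Set.mem_image, Set.mem_preimage, Sum.inr.injEq, exists_eq_right] at hs
      exact congrArg Sum.inr (Subtype.ext (hu s ⟨hs, oreCompose_adj_inr_inr.1 hts⟩))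

lemma IsPendantTriangle.oreCompose_inl {T : Set V1} (hxy : G1.Adj x y)
    (hT : IsPendantTriangle G1 T) (hy : y ∉ T) (hA : ∃! a, G2.Adj z a ∧ a ∈ A) :
    IsPendantTriangle (oreCompose G1 G2 x y z A) (Sum.inl '' T) := by
  refine ⟨?_, by rw [Set.ncard_image_of_injective _ Sum.inl_injective, hT.2.1], ?_⟩
  · rintro _ ⟨u, hu, rfl⟩ _ ⟨v, hv, rfl⟩ huv
    refine oreCompose_adj_inl_inl.2 ⟨hT.1 hu hv fun h => huv (by rw [h]), ?_⟩
    rintro (⟨-, rfl⟩ | ⟨rfl, -⟩)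
    exacts [hy hv, hy hu]
  rintro _ ⟨t, ht, rfl⟩
  obtain ⟨u, ⟨huT, htu⟩, hu⟩ := hT.2.2 t ht
  have hty : t ≠ y := ne_of_mem_of_not_mem ht hy
  by_cases htx : t = x
  · -- the outside neighbor `y` of `x` is replaced by the unique `A`-neighbor of `z`
    rw [htx] at htu hu
    have huy : u = y := (hu y ⟨hy, hxy⟩).symm
    obtain ⟨a, ha, ha'⟩ := hA
    refine ⟨Sum.inr ⟨a, (G2.ne_of_adj ha.1).symm⟩, ⟨by simp, by simp [htx, ha]⟩, ?_⟩
    rintro (s | s) ⟨hs, hts⟩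
    · simp only [Set.mem_image, Sum.inl.injEq, exists_eq_right] at hs
      rw [htx, oreCompose_adj_inl_inl] at hts
      exact absurd ((hu s ⟨hs, hts.1⟩).trans huy) fun h => hts.2 (Or.inl ⟨rfl, h⟩)
    · rw [htx, oreCompose_adj_inl_inr] at hts
      rcases hts with ⟨-, hzs, hsA⟩ | ⟨hxy', -⟩
      · exact congrArg Sum.inr (Subtype.ext (ha' s ⟨hzs, hsA⟩))
      · exact absurd hxy' (G1.ne_of_adj hxy)
  · refine ⟨Sum.inl u, ⟨by simpa using huT, by simp [htu, htx, hty]⟩, ?_⟩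
    rintro (s | s) ⟨hs, hts⟩
    · simp only [Set.mem_image, Sum.inl.injEq, exists_eq_right] at hs
      exact congrArg Sum.inl (hu s ⟨hs, (oreCompose_adj_inl_inl.1 hts).1⟩)
    · simp [htx, hty] at hts

end OreComposition

section FourOre

variable {V V1 V2 : Type} {G : SimpleGraph V} {G1 : SimpleGraph V1} {G2 : SimpleGraph V2}

lemma exists_pendantTriangle_not_mem_and_mem_or_disjoint
    (h : Nonempty (G ≃g completeGraph (Fin 4)) ∨ HasDisjointPendantTriangles G) (z : V) :
    ((∃ T, IsPendantTriangle G T ∧ z ∉ T) ∧ ∃ T, IsPendantTriangle G T ∧ z ∈ T) ∨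
      ∃ T T', IsPendantTriangle G T ∧ IsPendantTriangle G T' ∧ Disjoint T T' ∧
        z ∉ T ∧ z ∉ T' := by
  rcases h with ⟨⟨e⟩⟩ | ⟨T, T', hT, hT', hTT'⟩
  · have hK4 := isPendantTriangle_compl_singleton (W := Fin 4) (by simp)
    exact Or.inl ⟨⟨_, (hK4 (e z)).comap e, by simp⟩,
      ⟨_, (hK4 (e z + 1)).comap e, by simp⟩⟩
  · by_cases hzT : z ∈ T
    · exact Or.inl ⟨⟨T', hT', hTT'.notMem_of_mem_left hzT⟩, ⟨T, hT, hzT⟩⟩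
    by_cases hzT' : z ∈ T'
    · exact Or.inl ⟨⟨T, hT, hzT⟩, ⟨T', hT', hzT'⟩⟩
    · exact Or.inr ⟨T, T', hT, hT', hTT', hzT, hzT'⟩

lemma exists_pendantTriangle_not_mem
    (h : Nonempty (G ≃g completeGraph (Fin 4)) ∨ HasDisjointPendantTriangles G) (z : V) :
    ∃ T, IsPendantTriangle G T ∧ z ∉ T := by
  rcases exists_pendantTriangle_not_mem_and_mem_or_disjoint h z with
    ⟨hT, -⟩ | ⟨T, -, hT, -, -, hzT, -⟩
  exacts [hT, ⟨T, hT, hzT⟩]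

lemma IsOreComposition.hasDisjointPendantTriangles (hc : IsOreComposition G G1 G2)
    (h1 : Nonempty (G1 ≃g completeGraph (Fin 4)) ∨ HasDisjointPendantTriangles G1)
    (h2 : Nonempty (G2 ≃g completeGraph (Fin 4)) ∨ HasDisjointPendantTriangles G2) :
    HasDisjointPendantTriangles G := by
  obtain ⟨x, y, z, A, hxy, hA, hB, ⟨e⟩⟩ := hc
  refine HasDisjointPendantTriangles.comap e ?_
  have inl_inr_disjoint {T1 : Set V1} {T2 : Set {v : V2 // v ≠ z}} :
      Disjoint (Sum.inl '' T1) (Sum.inr '' T2) :=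
    Set.disjoint_left.2 <| by rintro _ ⟨_, _, rfl⟩ ⟨_, _, h⟩; cases h
  rcases exists_pendantTriangle_not_mem_and_mem_or_disjoint h2 z with
    ⟨⟨T2, hT2, hzT2⟩, ⟨T, hT, hzT⟩⟩ | ⟨T, T', hT, hT', hTT', hzT, hzT'⟩
  · -- `z` has degree three, so one of its two parts is a single edge
    obtain ⟨hfin, hdeg⟩ := hT.neighborSet_finite_ncard_le hzT
    rcases existsUnique_adj_mem_or_not_mem hfin hdeg hA hB with hAu | hBu
    · obtain ⟨T1, hT1, hyT1⟩ := exists_pendantTriangle_not_mem h1 y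
      exact ⟨_, _, hT1.oreCompose_inl hxy hyT1 hAu, hT2.oreCompose_inr hzT2, inl_inr_disjoint⟩
    · obtain ⟨T1, hT1, hxT1⟩ := exists_pendantTriangle_not_mem h1 x
      rw [← oreCompose_swap]
      exact ⟨_, _, hT1.oreCompose_inl hxy.symm hxT1 hBu, hT2.oreCompose_inr hzT2,
        inl_inr_disjoint⟩
  · exact ⟨_, _, hT.oreCompose_inr hzT, hT'.oreCompose_inr hzT',
      (Set.disjoint_image_iff Sum.inr_injective).2 (hTT'.preimage _)⟩

theorem IsFourOre.nonempty_iso_or_hasDisjointPendantTriangles (h : IsFourOre G) :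
    Nonempty (G ≃g completeGraph (Fin 4)) ∨ HasDisjointPendantTriangles G := by
  induction h with
  | k4 G hG => exact Or.inl hG
  | comp G G1 G2 _ _ hc ih1 ih2 => exact Or.inr (hc.hasDisjointPendantTriangles ih1 ih2)

end FourOre

/-- Let `G` be a `4`-Ore graph not isomorphic to `K4`. Then for
every vertex `v` of `G`, there exists a nontrivial cocollapsible subset of
`V(G)` contained in `V(G) ∖ {v}`. -/
theorem statement_14 {V : Type} [Fintype V] (G : SimpleGraph V)
    (hOre : IsFourOre G) (hK4 : ¬ Nonempty (G ≃g completeGraph (Fin 4)))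
    (v : V) :
    ∃ R : Set V, NontrivialCocollapsible G R ∧ v ∉ R := by
  obtain ⟨T, T', hT, hT', hTT'⟩ :=
    hOre.nonempty_iso_or_hasDisjointPendantTriangles.resolve_left hK4
  by_cases hv : v ∈ T
  · exact ⟨T', hT'.nontrivialCocollapsible hT hTT'.symm, hTT'.notMem_of_mem_left hv⟩
  · exact ⟨T, hT.nontrivialCocollapsible hT' hTT', hv⟩
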